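/- For every integer L ≥ 1 and every image f : ZMod N × ZMod M → ℝ, TV_i(f) ≤ TV_L(f) ≤ TV_a(f). -/

import Mathlib

open Real

/-- Periodic discrete partial difference in the first (column) direction. -/
def gradX {N M : ℕ} (f : ZMod N × ZMod M → ℝ) : ZMod N × ZMod M → ℝ :=
  fun p => f p - f (p.1 - 1, p.2)

/-- Periodic discrete partial difference in the second (row) direction. -/
def gradY {N M : ℕ} (f : ZMod N × ZMod M → ℝ) : ZMod N × ZMod M → ℝ :=
  fun p => f p - f (p.1, p.2 - 1)

/-- Anisotropic total variation. -/
noncomputable def TVa {N M : ℕ} [NeZero N] [NeZero M] (f : ZMod N × ZMod M → ℝ) : ℝ :=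
  ∑ p : ZMod N × ZMod M, (|gradX f p| + |gradY f p|)

/-- Isotropic total variation. -/
noncomputable def TVi {N M : ℕ} [NeZero N] [NeZero M] (f : ZMod N × ZMod M → ℝ) : ℝ :=
  ∑ p : ZMod N × ZMod M, Real.sqrt ((gradX f p) ^ 2 + (gradY f p) ^ 2)

/-- Normalization constant `d_L`. -/
noncomputable def dL (L : ℕ) : ℝ :=
  (∑ k ∈ Finset.range L,
      (Real.cos (π * (k : ℝ) / (2 * (L : ℝ))) + Real.sin (π * (k : ℝ) / (2 * (L : ℝ)))))⁻¹

/-- Multidirectional total variation `TV_L`. -/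
noncomputable def TVL {N M : ℕ} [NeZero N] [NeZero M] (L : ℕ)
    (f : ZMod N × ZMod M → ℝ) : ℝ :=
  dL L * ∑ p : ZMod N × ZMod M, ∑ k ∈ Finset.range L,
    (|gradX f p * Real.cos (π * (k : ℝ) / (2 * (L : ℝ))) +
        gradY f p * Real.sin (π * (k : ℝ) / (2 * (L : ℝ)))| +
     |gradY f p * Real.cos (π * (k : ℝ) / (2 * (L : ℝ))) -
        gradX f p * Real.sin (π * (k : ℝ) / (2 * (L : ℝ)))|)

/-!
Write the gradient as `r (cos φ, sin φ)`. The `k`-th directional term of `TV_L` is then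
`r h(θ_k - φ)` with `h = |cos| + |sin|`, so `TV_i ≤ TV_L` reduces to
`∑ₖ h(ψ + θ_k) ≥ ∑ₖ h(θ_k)` for every `ψ`. As `h` has period `π/2 = L θ₁`, the left side has
period `θ₁`; for `ψ ∈ [0, θ₁]` all the points `ψ + θ_k` lie in `[0, π/2]`, where `h = cos + sin`
is concave, so the left side is concave there and attains its minimum at `ψ = 0`.
The bound `TV_L ≤ TV_a` is the triangle inequality termwise, since `cos θ_k, sin θ_k ≥ 0`.
-/

open Finset Function Set

lemma concaveOn_sum {𝕜 E β ι : Type*} [Semiring 𝕜] [PartialOrder 𝕜] [AddCommMonoid E]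
    [AddCommMonoid β] [PartialOrder β] [IsOrderedAddMonoid β] [SMul 𝕜 E] [Module 𝕜 β]
    {s : Set E} (hs : Convex 𝕜 s) {t : Finset ι} {f : ι → E → β}
    (hf : ∀ i ∈ t, ConcaveOn 𝕜 s (f i)) : ConcaveOn 𝕜 s (fun x => ∑ i ∈ t, f i x) := by
  classical
  induction t using Finset.induction_on with
  | empty => simpa using concaveOn_const 0 hs
  | insert i t hi ih =>
    simp only [sum_insert hi]
    exact (hf i (mem_insert_self i t)).add (ih fun j hj => hf j (mem_insert_of_mem hj))

lemma Function.Periodic.sum_range_add_mul {α β : Type*} [Semiring α] [AddCommMonoid β]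
    {h : α → β} {p : α} {L : ℕ} (hh : Periodic h (L * p)) :
    Periodic (fun x => ∑ k ∈ range L, h (x + k * p)) p := by
  intro x
  cases L with
  | zero => simp
  | succ n =>
    have hlast : h (x + (n * p + p)) = h x := by simpa [add_mul] using hh x
    simp only [sum_range_succ' (fun k => h (x + k * p)), sum_range_succ, Nat.cast_succ,
      add_mul, one_mul, add_assoc, add_comm p, Nat.cast_zero, zero_mul, add_zero, hlast]

lemma Function.Periodic.apply_zero_le_of_concaveOn {G : ℝ → ℝ} {p : ℝ} (hG : Periodic G p)
    (hp : 0 < p) (hc : ConcaveOn ℝ (Icc 0 p) G) (x : ℝ) : G 0 ≤ G x := by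
  obtain ⟨y, hy, hxy⟩ := hG.exists_mem_Ico₀ hp x
  rw [hxy]
  have := hc.min_le_of_mem_Icc (left_mem_Icc.2 hp.le) (right_mem_Icc.2 hp.le)
    (Ico_subset_Icc_self hy)
  rwa [hG.eq, min_self] at this

noncomputable def absCosAddAbsSin (t : ℝ) : ℝ := |cos t| + |sin t|

lemma absCosAddAbsSin_periodic : Periodic absCosAddAbsSin (π / 2) := fun t => by
  simp [absCosAddAbsSin, cos_add_pi_div_two, sin_add_pi_div_two, add_comm]

lemma absCosAddAbsSin_of_mem_Icc {t : ℝ} (ht : t ∈ Icc 0 (π / 2)) :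
    absCosAddAbsSin t = cos t + sin t := by
  rw [absCosAddAbsSin, abs_of_nonneg (cos_nonneg_of_mem_Icc ⟨by linarith [ht.1, pi_pos], ht.2⟩),
    abs_of_nonneg (sin_nonneg_of_nonneg_of_le_pi ht.1 (by linarith [ht.2, pi_pos]))]

lemma concaveOn_absCosAddAbsSin : ConcaveOn ℝ (Icc 0 (π / 2)) absCosAddAbsSin := by
  refine ConcaveOn.congr ?_ fun t ht => (absCosAddAbsSin_of_mem_Icc ht).symm
  have hpi := pi_pos
  exact (strictConcaveOn_cos_Icc.concaveOn.subset (Icc_subset_Icc (by linarith) le_rfl)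
      (convex_Icc _ _)).add
    (strictConcaveOn_sin_Icc.concaveOn.subset (Icc_subset_Icc le_rfl (by linarith)) (convex_Icc _ _))

noncomputable def rotatedL1Norm (θ x y : ℝ) : ℝ :=
  |x * cos θ + y * sin θ| + |y * cos θ - x * sin θ|

lemma rotatedL1Norm_polar (r φ θ : ℝ) :
    rotatedL1Norm θ (r * cos φ) (r * sin φ) = |r| * absCosAddAbsSin (θ - φ) := by
  have h₁ : r * cos φ * cos θ + r * sin φ * sin θ = r * cos (θ - φ) := by rw [cos_sub]; ring
  have h₂ : r * sin φ * cos θ - r * cos φ * sin θ = -(r * sin (θ - φ)) := by rw [sin_sub]; ring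
  rw [rotatedL1Norm, h₁, h₂, abs_neg, abs_mul, abs_mul, absCosAddAbsSin, mul_add]

lemma rotatedL1Norm_le {θ : ℝ} (hθ : θ ∈ Icc 0 (π / 2)) (x y : ℝ) :
    rotatedL1Norm θ x y ≤ (cos θ + sin θ) * (|x| + |y|) := by
  have hc : 0 ≤ cos θ := cos_nonneg_of_mem_Icc ⟨by linarith [hθ.1, pi_pos], hθ.2⟩
  have hs : 0 ≤ sin θ := sin_nonneg_of_nonneg_of_le_pi hθ.1 (by linarith [hθ.2, pi_pos])
  calc rotatedL1Norm θ x y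
      ≤ (|x * cos θ| + |y * sin θ|) + (|y * cos θ| + |x * sin θ|) :=
        add_le_add (abs_add_le _ _) (abs_sub _ _)
    _ = (cos θ + sin θ) * (|x| + |y|) := by
        rw [abs_mul, abs_mul, abs_mul, abs_mul, abs_of_nonneg hc, abs_of_nonneg hs]; ring

noncomputable def dirAngle (L k : ℕ) : ℝ := π * k / (2 * L)

lemma dirAngle_eq_mul (L k : ℕ) : dirAngle L k = k * (π / (2 * L)) := by
  rw [dirAngle]; ring

lemma dirAngle_mem_Icc {L k : ℕ} (hk : k ≤ L) : dirAngle L k ∈ Icc 0 (π / 2) := by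
  rcases Nat.eq_zero_or_pos L with rfl | hL
  · simp only [dirAngle, Nat.cast_zero, mul_zero, div_zero]
    exact ⟨le_rfl, by positivity⟩
  have hkL : (k : ℝ) ≤ L := by exact_mod_cast hk
  rw [dirAngle_eq_mul]
  constructor
  · positivity
  · calc (k : ℝ) * (π / (2 * L)) ≤ L * (π / (2 * L)) := by gcongr
      _ = π / 2 := by field_simp

noncomputable def dirNormalizer (L : ℕ) : ℝ :=
  ∑ k ∈ range L, (cos (dirAngle L k) + sin (dirAngle L k))

lemma dirNormalizer_pos {L : ℕ} (hL : 0 < L) : 0 < dirNormalizer L := by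
  have hnonneg : ∀ k ∈ range L, 0 ≤ cos (dirAngle L k) + sin (dirAngle L k) := fun k hk => by
    rw [← absCosAddAbsSin_of_mem_Icc (dirAngle_mem_Icc (mem_range.1 hk).le)]
    exact add_nonneg (abs_nonneg _) (abs_nonneg _)
  calc (0 : ℝ) < cos (dirAngle L 0) + sin (dirAngle L 0) := by simp [dirAngle]
    _ ≤ dirNormalizer L := single_le_sum hnonneg (mem_range.2 hL)

lemma dirNormalizer_le_sum_absCosAddAbsSin {L : ℕ} (hL : 0 < L) (ψ : ℝ) :
    dirNormalizer L ≤ ∑ k ∈ range L, absCosAddAbsSin (ψ + dirAngle L k) := by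
  have hp : 0 < π / (2 * L) := by positivity
  have hperiod : Periodic (fun x => ∑ k ∈ range L, absCosAddAbsSin (x + dirAngle L k))
      (π / (2 * L)) := by
    simp only [dirAngle_eq_mul]
    have hLp : (L : ℝ) * (π / (2 * L)) = π / 2 := by field_simp
    exact Periodic.sum_range_add_mul (hLp ▸ absCosAddAbsSin_periodic)
  have hconcave : ConcaveOn ℝ (Icc 0 (π / (2 * L)))
      (fun x => ∑ k ∈ range L, absCosAddAbsSin (x + dirAngle L k)) := by
    refine concaveOn_sum (convex_Icc _ _) fun k hk => ?_
    refine (concaveOn_absCosAddAbsSin.translate_left (dirAngle L k)).subset ?_ (convex_Icc _ _)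
    intro x hx
    have hθ := dirAngle_mem_Icc (Nat.succ_le_of_lt (mem_range.1 hk))
    simp only [dirAngle_eq_mul, Nat.cast_succ, Set.mem_Icc] at hθ hx ⊢
    constructor <;> nlinarith [hx.1, hx.2, hθ.1, hθ.2]
  refine le_of_eq_of_le (sum_congr rfl fun k hk => ?_)
    (hperiod.apply_zero_le_of_concaveOn hp hconcave ψ)
  rw [zero_add, absCosAddAbsSin_of_mem_Icc (dirAngle_mem_Icc (mem_range.1 hk).le)]

lemma dirNormalizer_mul_sqrt_le {L : ℕ} (hL : 0 < L) (x y : ℝ) :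
    dirNormalizer L * √(x ^ 2 + y ^ 2) ≤ ∑ k ∈ range L, rotatedL1Norm (dirAngle L k) x y := by
  set z : ℂ := ⟨x, y⟩
  have hnorm : √(x ^ 2 + y ^ 2) = ‖z‖ := by
    rw [Complex.norm_def, Complex.normSq_apply, sq, sq]
  have hx : ‖z‖ * cos z.arg = x := Complex.norm_mul_cos_arg z
  have hy : ‖z‖ * sin z.arg = y := Complex.norm_mul_sin_arg z
  have hpolar : ∀ k, rotatedL1Norm (dirAngle L k) x y
      = ‖z‖ * absCosAddAbsSin (-z.arg + dirAngle L k) := fun k => by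
    rw [← hx, ← hy, rotatedL1Norm_polar, abs_norm, neg_add_eq_sub]
  rw [hnorm, sum_congr rfl fun k _ => hpolar k, ← mul_sum, mul_comm]
  exact mul_le_mul_of_nonneg_left (dirNormalizer_le_sum_absCosAddAbsSin hL _) (norm_nonneg z)

lemma sum_rotatedL1Norm_le (L : ℕ) (x y : ℝ) :
    ∑ k ∈ range L, rotatedL1Norm (dirAngle L k) x y ≤ dirNormalizer L * (|x| + |y|) := by
  rw [dirNormalizer, sum_mul]
  exact sum_le_sum fun k hk => rotatedL1Norm_le (dirAngle_mem_Icc (mem_range.1 hk).le) x y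

theorem stmt5 {N M : ℕ} [NeZero N] [NeZero M] (L : ℕ) (hL : 1 ≤ L)
    (f : ZMod N × ZMod M → ℝ) :
    TVi f ≤ TVL L f ∧ TVL L f ≤ TVa f := by
  have hTVL : TVL L f = (dirNormalizer L)⁻¹ *
      ∑ p, ∑ k ∈ range L, rotatedL1Norm (dirAngle L k) (gradX f p) (gradY f p) :=
    rfl
  have hpos := dirNormalizer_pos hL
  rw [hTVL, TVi, TVa, le_inv_mul_iff₀ hpos, inv_mul_le_iff₀ hpos, mul_sum, mul_sum]
  exact ⟨sum_le_sum fun p _ => dirNormalizer_mul_sqrt_le hL _ _,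
    sum_le_sum fun p _ => sum_rotatedL1Norm_le L _ _⟩
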